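/- In the β-discounted model (UD): if J* ≥ 0, then J* is the unique fixed point of T within the set of functions { J : S → [-∞,+∞] | -b ≤ J ≤ J* + b for some scalar b ≥ 0 }; that is, if J = T(J) and -b ≤ J ≤ J* + b for some b ≥ 0, then J = J*. -/

import Mathlib

/-!
Common framework: countable-state/countable-control total-cost MDPs under the
General Convergence (GC) condition, following H. Yu, "On Convergence of Value
Iteration for a Class of Total Cost Markov Decision Processes".

States `S` and controls `C` are countable types; `U x` is the nonempty set of
feasible controls at `x`; `g x u ∈ (-∞, +∞]` is the one-stage cost (an `EReal`
that is never `⊥` on feasible pairs); `q x u x'` are transition probabilities.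

A policy is represented by its conditional control distributions given the
(reversed) history of past (state, control) pairs and the current state.
Expectations are computed by explicit countable sums, splitting every
extended-real quantity into its positive and negative parts (computed in
`ℝ≥0∞`) and recombining with the convention `∞ - ∞ = ∞`.
-/

open scoped ENNReal Classical
open Filter

noncomputable section

namespace GCMDP

/-- The positive part of an extended real, as an element of `ℝ≥0∞`. -/
def ePos (a : EReal) : ℝ≥0∞ := if a = ⊤ then ⊤ else ENNReal.ofReal a.toReal

/-- Recombine a positive part `P` and a negative part `N` into an extended real,
with the convention `∞ - ∞ = ∞`. -/
def signedSum (P N : ℝ≥0∞) : EReal := if P = ⊤ then ⊤ else (P : EReal) - (N : EReal)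

variable {S C : Type}

/-- A (randomized, history-dependent) policy: to each reversed list of past
(state, control) pairs and each current state it assigns a mass function on
controls. -/
def Policy (S C : Type) : Type := List (S × C) → S → C → ℝ≥0∞

/-- A policy is valid for the control constraint `U` if each of its conditional
distributions is a probability distribution concentrated on the feasible set. -/
def IsPolicy (U : S → Set C) (π : Policy S C) : Prop :=
  ∀ (h : List (S × C)) (x : S), (∑' u : C, π h x u) = 1 ∧ ∀ u : C, π h x u ≠ 0 → u ∈ U x

/-- A policy is nonrandomized if each of its conditional distributions is a
point mass. -/
def Nonrandomized (π : Policy S C) : Prop :=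
  ∀ (h : List (S × C)) (x : S), ∃ u : C, ∀ u' : C, π h x u' = if u' = u then 1 else 0

/-- The initial state recorded in a reversed history `h` with current state `x`. -/
def initOf (h : List (S × C)) (x : S) : S := ((h.getLast?).map Prod.fst).getD x

/-- A policy is semi-Markov if its decision at time `k` depends on the history
only through the time `k`, the initial state and the current state. -/
def IsSemiMarkov (π : Policy S C) : Prop :=
  ∀ (h h' : List (S × C)) (x : S), h.length = h'.length → initOf h x = initOf h' x →
    π h x = π h' x

/-- A policy is Markov if its decision at time `k` depends on the history only
through the time `k` and the current state. -/
def IsMarkov (π : Policy S C) : Prop :=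
  ∀ (h h' : List (S × C)) (x : S), h.length = h'.length → π h x = π h' x

/-- A policy is stationary if its decision depends only on the current state. -/
def IsStationary (π : Policy S C) : Prop :=
  ∀ (h h' : List (S × C)) (x : S), π h x = π h' x

/-- The stationary policy determined by a one-step decision rule `μ`. -/
def toPolicy (μ : S → C → ℝ≥0∞) : Policy S C := fun _ x u => μ x u

/-- Probability that, starting from `x₀` and following policy `π`, the first
transitions produce the reversed history `h` and current state `y`. -/
def histProb (q : S → C → S → ℝ≥0∞) (π : Policy S C) (x₀ : S) :
    List (S × C) → S → ℝ≥0∞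
  | [], y => if y = x₀ then 1 else 0
  | (z, u) :: h, y => histProb q π x₀ h z * π h z u * q z u y

/-- Marginal distribution of the state `x_n` at time `n` under policy `π`
started at `x₀`. -/
def sDist (q : S → C → S → ℝ≥0∞) (π : Policy S C) (x₀ : S) (n : ℕ) (y : S) : ℝ≥0∞ :=
  ∑' h : {l : List (S × C) // l.length = n}, histProb q π x₀ h.1 y

/-- Joint distribution of the state-control pair `(x_n, u_n)` at time `n`. -/
def saDist (q : S → C → S → ℝ≥0∞) (π : Policy S C) (x₀ : S) (n : ℕ) (y : S) (u : C) : ℝ≥0∞ :=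
  ∑' h : {l : List (S × C) // l.length = n}, histProb q π x₀ h.1 y * π h.1 y u

/-- Expectation `E^π_{x₀}[f(x_n, u_n)]` of a nonnegative cost. -/
def costAt (q : S → C → S → ℝ≥0∞) (π : Policy S C) (x₀ : S) (n : ℕ)
    (f : S → C → ℝ≥0∞) : ℝ≥0∞ :=
  ∑' y : S, ∑' u : C, saDist q π x₀ n y u * f y u

/-- Positive part `g₊` of the one-stage cost. -/
def gPos (g : S → C → EReal) (x : S) (u : C) : ℝ≥0∞ := ePos (g x u)

/-- Negative part `g₋` of the one-stage cost. -/
def gNeg (g : S → C → EReal) (x : S) (u : C) : ℝ≥0∞ := ePos (-(g x u))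

/-- `J_π^+(x) = E^π_x[∑_k g₊(x_k,u_k)]`. -/
def Jplus (q : S → C → S → ℝ≥0∞) (g : S → C → EReal) (π : Policy S C) (x : S) : ℝ≥0∞ :=
  ∑' n : ℕ, costAt q π x n (gPos g)

/-- `J_π^-(x) = E^π_x[∑_k g₋(x_k,u_k)]`. -/
def Jminus (q : S → C → S → ℝ≥0∞) (g : S → C → EReal) (π : Policy S C) (x : S) : ℝ≥0∞ :=
  ∑' n : ℕ, costAt q π x n (gNeg g)

/-- The total cost `J_π(x) = J_π^+(x) - J_π^-(x)` of a policy. -/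
def Jpol (q : S → C → S → ℝ≥0∞) (g : S → C → EReal) (π : Policy S C) (x : S) : EReal :=
  signedSum (Jplus q g π x) (Jminus q g π x)

/-- The general convergence (GC) condition: `sup_π J_π^-(x) < ∞` for all `x`. -/
def GC (U : S → Set C) (q : S → C → S → ℝ≥0∞) (g : S → C → EReal) : Prop :=
  ∀ x : S, (⨆ π ∈ {π' : Policy S C | IsPolicy U π'}, Jminus q g π x) ≠ ⊤

/-- The optimal cost function `J*(x) = inf_π J_π(x)`. -/
def Jstar (U : S → Set C) (q : S → C → S → ℝ≥0∞) (g : S → C → EReal) (x : S) : EReal :=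
  ⨅ π ∈ {π' : Policy S C | IsPolicy U π'}, Jpol q g π x

/-- `J^{*+}(x) = inf_π J_π^+(x)`. -/
def JstarPlus (U : S → Set C) (q : S → C → S → ℝ≥0∞) (g : S → C → EReal) (x : S) : ℝ≥0∞ :=
  ⨅ π ∈ {π' : Policy S C | IsPolicy U π'}, Jplus q g π x

/-- `J^{*-}(x) = inf_π J_π^-(x)`. -/
def JstarMinus (U : S → Set C) (q : S → C → S → ℝ≥0∞) (g : S → C → EReal) (x : S) : ℝ≥0∞ :=
  ⨅ π ∈ {π' : Policy S C | IsPolicy U π'}, Jminus q g π x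

/-- The general one-stage dynamic programming operator with one-stage cost `c`:
`(opT c J)(x) = inf_{u ∈ U(x)} { c(x,u) + ∑_{x'} J(x') q(x'|x,u) }`, where the
bracket is evaluated by separating positive and negative parts, with the
convention `∞ - ∞ = ∞`. -/
def opT (U : S → Set C) (q : S → C → S → ℝ≥0∞) (c : S → C → EReal)
    (J : S → EReal) (x : S) : EReal :=
  ⨅ u ∈ U x,
    signedSum (ePos (c x u) + ∑' x' : S, q x u x' * ePos (J x'))
      (ePos (-(c x u)) + ∑' x' : S, q x u x' * ePos (-(J x')))

/-- The dynamic programming operator `T` of the total cost problem. -/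
def Top (U : S → Set C) (q : S → C → S → ℝ≥0∞) (g : S → C → EReal) :
    (S → EReal) → S → EReal :=
  opT U q g

/-- The operator `T₊` associated with the positive part `g₊` of the cost. -/
def TopPlus (U : S → Set C) (q : S → C → S → ℝ≥0∞) (g : S → C → EReal) :
    (S → EReal) → S → EReal :=
  opT U q (fun x u => max (g x u) 0)

/-- The operator `T₋` associated with the (negated) negative part `-g₋` of the cost. -/
def TopMinus (U : S → Set C) (q : S → C → S → ℝ≥0∞) (g : S → C → EReal) :
    (S → EReal) → S → EReal :=
  opT U q (fun x u => min (g x u) 0)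

/-- The cost-free operator `T₀`. -/
def TopZero (U : S → Set C) (q : S → C → S → ℝ≥0∞) :
    (S → EReal) → S → EReal :=
  opT U q (fun _ _ => 0)

/-- The monotone-increasing modification `T̃(J) = max{J, T(J)}` of `T`. -/
def Ttil (U : S → Set C) (q : S → C → S → ℝ≥0∞) (g : S → C → EReal)
    (J : S → EReal) (x : S) : EReal :=
  max (J x) (Top U q g J x)

/-- The operator `T_μ` associated with a stationary decision rule `μ`. -/
def Tmu (q : S → C → S → ℝ≥0∞) (g : S → C → EReal) (μ : S → C → ℝ≥0∞)
    (J : S → EReal) (x : S) : EReal :=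
  signedSum (∑' u : C, μ x u * (ePos (g x u) + ∑' x' : S, q x u x' * ePos (J x')))
    (∑' u : C, μ x u * (ePos (-(g x u)) + ∑' x' : S, q x u x' * ePos (-(J x'))))

/-- Expectation `E^π_{x₀}[J(x_n)]` of an extended-real function of the state at
time `n` (positive and negative parts combined with the convention `∞-∞=∞`). -/
def expState (q : S → C → S → ℝ≥0∞) (π : Policy S C) (x₀ : S) (n : ℕ)
    (J : S → EReal) : EReal :=
  signedSum (∑' y : S, sDist q π x₀ n y * ePos (J y))
    (∑' y : S, sDist q π x₀ n y * ePos (-(J y)))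

/-- The expected tail cost `E^π_{x₀}[∑_{k ≥ n} g(x_k, u_k)]`. -/
def tailCost (q : S → C → S → ℝ≥0∞) (g : S → C → EReal) (π : Policy S C)
    (x₀ : S) (n : ℕ) : EReal :=
  signedSum (∑' k : ℕ, costAt q π x₀ (n + k) (gPos g))
    (∑' k : ℕ, costAt q π x₀ (n + k) (gNeg g))

/-- Membership in the class `A₀(S)`: functions nowhere `-∞` such that
`inf_{n ≥ 1} T₀ⁿ(min{J, 0})` is nowhere `-∞`. -/
def MemA0 (U : S → Set C) (q : S → C → S → ℝ≥0∞) (J : S → EReal) : Prop :=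
  (∀ x : S, J x ≠ ⊥) ∧
    ∀ x : S, (⨅ n : ℕ, (TopZero U q)^[n + 1] (fun y => min (J y) 0) x) ≠ ⊥


/-! ### The β-discounted model (UD) -/

/-- Discounted `J_π^+(x) = E^π_x[∑_k β^k g₊(x_k,u_k)]`. -/
def JplusD (β : ℝ) (q : S → C → S → ℝ≥0∞) (g : S → C → EReal) (π : Policy S C) (x : S) : ℝ≥0∞ :=
  ∑' n : ℕ, ENNReal.ofReal β ^ n * costAt q π x n (gPos g)

/-- Discounted `J_π^-(x) = E^π_x[∑_k β^k g₋(x_k,u_k)]`. -/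
def JminusD (β : ℝ) (q : S → C → S → ℝ≥0∞) (g : S → C → EReal) (π : Policy S C) (x : S) : ℝ≥0∞ :=
  ∑' n : ℕ, ENNReal.ofReal β ^ n * costAt q π x n (gNeg g)

/-- The discounted total cost of a policy. -/
def JpolD (β : ℝ) (q : S → C → S → ℝ≥0∞) (g : S → C → EReal) (π : Policy S C) (x : S) : EReal :=
  signedSum (JplusD β q g π x) (JminusD β q g π x)

/-- The (GC) condition for the discounted model. -/
def GCD (β : ℝ) (U : S → Set C) (q : S → C → S → ℝ≥0∞) (g : S → C → EReal) : Prop :=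
  ∀ x : S, (⨆ π ∈ {π' : Policy S C | IsPolicy U π'}, JminusD β q g π x) ≠ ⊤

/-- The discounted optimal cost function. -/
def JstarD (β : ℝ) (U : S → Set C) (q : S → C → S → ℝ≥0∞) (g : S → C → EReal) (x : S) : EReal :=
  ⨅ π ∈ {π' : Policy S C | IsPolicy U π'}, JpolD β q g π x

/-- Discounted `J^{*+}`. -/
def JstarPlusD (β : ℝ) (U : S → Set C) (q : S → C → S → ℝ≥0∞) (g : S → C → EReal) (x : S) : ℝ≥0∞ :=
  ⨅ π ∈ {π' : Policy S C | IsPolicy U π'}, JplusD β q g π x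

/-- Discounted `J^{*-}`. -/
def JstarMinusD (β : ℝ) (U : S → Set C) (q : S → C → S → ℝ≥0∞) (g : S → C → EReal) (x : S) : ℝ≥0∞ :=
  ⨅ π ∈ {π' : Policy S C | IsPolicy U π'}, JminusD β q g π x

/-- The discounted dynamic programming operator
`T(J)(x) = inf_{u ∈ U(x)} { g(x,u) + β ∑_{x'} J(x') q(x'|x,u) }`, with the
convention `∞ - ∞ = ∞`. -/
def TopD (β : ℝ) (U : S → Set C) (q : S → C → S → ℝ≥0∞) (g : S → C → EReal)
    (J : S → EReal) (x : S) : EReal :=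
  ⨅ u ∈ U x,
    signedSum (ePos (g x u) + ENNReal.ofReal β * ∑' x' : S, q x u x' * ePos (J x'))
      (ePos (-(g x u)) + ENNReal.ofReal β * ∑' x' : S, q x u x' * ePos (-(J x')))

/-!
Upper bound `J ≤ J*`. Since `J* ≥ 0`, the negative parts of `J*` vanish, and averaging the
first-step decomposition of an arbitrary policy cost gives the Bellman inequality `T J* ≤ J*`.
Together with monotonicity of `T` and `T (K + c) ≤ T K + β c` for `K ≥ 0`, iterating `J = T J`
from `J ≤ J* + b` gives `J ≤ J* + βⁿ b` for every `n`.

Lower bound `J* ≤ J`. Choosing at each state a control that is `(1 - β) δ`-optimal in `T J`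
defines a deterministic stationary policy `μ`. Written with positive and negative parts in
`ℝ≥0∞`, the fixed-point equation becomes a one-step inequality between the two cost-evaluation
operators of the Markov chain driven by `μ`; it propagates to all `n`-stage costs with terminal
cost `J`, the errors adding up to at most `δ`. Because `J ≥ -b`, the terminal negative part
contributes at most `βⁿ b`, and letting `n → ∞` gives `J_μ ≤ J + δ`.
-/

-- `ePos` unfolds to `EReal.toENNReal`.
lemma ePos_mono : Monotone ePos := fun _ _ h => EReal.toENNReal_le_toENNReal h

lemma ePos_coe (x : ℝ≥0∞) : ePos x = x := EReal.toENNReal_coe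

lemma ePos_neg_of_nonneg {a : EReal} (ha : 0 ≤ a) : ePos (-a) = 0 :=
  EReal.toENNReal_of_nonpos (EReal.neg_le.2 (by simpa using ha))

lemma ePos_add_le (a b : EReal) : ePos (a + b) ≤ ePos a + ePos b := EReal.toENNReal_add_le

lemma ePos_neg_ne_top {a : EReal} (ha : a ≠ ⊥) : ePos (-a) ≠ ⊤ :=
  EReal.toENNReal_ne_top_iff.2 (by simpa using ha)

lemma signedSum_ePos (a : EReal) : signedSum (ePos a) (ePos (-a)) = a := by
  induction a with
  | bot => simp [signedSum, ePos]
  | top => simp [signedSum, ePos]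
  | coe r =>
    rw [signedSum, if_neg (by simp [ePos]), ← EReal.coe_neg]
    simp only [ePos, EReal.coe_ne_top, if_false, EReal.toReal_coe, EReal.coe_ennreal_ofReal]
    rcases le_total r 0 with h | h
    · rw [max_eq_right h, max_eq_left (neg_nonneg.2 h)]; simp
    · rw [max_eq_left h, max_eq_right (neg_nonpos.2 h)]; simp

lemma signedSum_mono {P P' N N' : ℝ≥0∞} (hP : P ≤ P') (hN : N' ≤ N) :
    signedSum P N ≤ signedSum P' N' := by
  unfold signedSum
  split_ifs with h h'
  · exact le_rfl
  · exact absurd (top_le_iff.1 (h ▸ hP)) h'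
  · exact le_top
  · exact EReal.sub_le_sub (EReal.coe_ennreal_le_coe_ennreal_iff.2 hP)
      (EReal.coe_ennreal_le_coe_ennreal_iff.2 hN)

lemma signedSum_add_coe (P N : ℝ≥0∞) {e : ℝ≥0∞} (he : e ≠ ⊤) :
    signedSum P N + e = signedSum (P + e) N := by
  rcases eq_or_ne P ⊤ with rfl | hP
  · simp [signedSum]
  rw [signedSum, signedSum, if_neg hP, if_neg (ENNReal.add_ne_top.2 ⟨hP, he⟩),
    EReal.coe_ennreal_add, sub_eq_add_neg, sub_eq_add_neg, add_right_comm]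

lemma signedSum_le_signedSum_iff {P N P' N' : ℝ≥0∞} (hN : N ≠ ⊤) :
    signedSum P N ≤ signedSum P' N' ↔ P + N' ≤ P' + N := by
  rcases eq_or_ne P' ⊤ with rfl | hP'
  · simp [signedSum]
  lift N to NNReal using hN
  lift P' to NNReal using hP'
  rcases eq_or_ne P ⊤ with rfl | hP
  · simp only [signedSum, if_pos, top_add, top_le_iff, ENNReal.add_eq_top, ENNReal.coe_ne_top,
      or_self, iff_false]
    induction N' <;> simp [EReal.coe_nnreal_eq_coe_real, ← EReal.coe_sub]
  lift P to NNReal using hP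
  rcases eq_or_ne N' ⊤ with rfl | hN'
  · simp [signedSum, ← ENNReal.coe_add, EReal.coe_nnreal_eq_coe_real, ← EReal.coe_sub]
  lift N' to NNReal using hN'
  simp only [signedSum, ENNReal.coe_ne_top, if_false]
  rw [EReal.coe_nnreal_eq_coe_real, EReal.coe_nnreal_eq_coe_real, EReal.coe_nnreal_eq_coe_real,
    EReal.coe_nnreal_eq_coe_real, ← EReal.coe_sub, ← EReal.coe_sub, EReal.coe_le_coe_iff,
    ← ENNReal.coe_add, ← ENNReal.coe_add, ENNReal.coe_le_coe, ← NNReal.coe_le_coe,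
    NNReal.coe_add, NNReal.coe_add]
  constructor <;> intro <;> linarith

lemma signedSum_le_add_iff {P N e : ℝ≥0∞} (hN : N ≠ ⊤) (he : e ≠ ⊤) (a : EReal) :
    signedSum P N ≤ a + e ↔ P + ePos (-a) ≤ ePos a + N + e := by
  rw [add_right_comm, ← signedSum_le_signedSum_iff hN, ← signedSum_add_coe _ _ he,
    signedSum_ePos]

lemma le_signedSum_iff {L : EReal} (hL : L ≠ ⊥) {P N : ℝ≥0∞} :
    L ≤ signedSum P N ↔ ePos L + N ≤ P + ePos (-L) := by
  rw [← signedSum_le_signedSum_iff (ePos_neg_ne_top hL), signedSum_ePos]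

lemma le_signedSum_tsum {ι : Type*} {w A N : ι → ℝ≥0∞} (hw : ∑' i, w i = 1) {L : EReal}
    (h : ∀ i, w i ≠ 0 → L ≤ signedSum (A i) (N i)) :
    L ≤ signedSum (∑' i, w i * A i) (∑' i, w i * N i) := by
  rcases eq_or_ne L ⊥ with rfl | hL
  · exact bot_le
  simp only [le_signedSum_iff hL] at h ⊢
  calc ePos L + ∑' i, w i * N i = ∑' i, w i * (ePos L + N i) := by
        simp only [mul_add, ENNReal.tsum_add, ENNReal.tsum_mul_right, hw, one_mul]
    _ ≤ ∑' i, w i * (A i + ePos (-L)) := by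
        refine ENNReal.tsum_le_tsum fun i => ?_
        rcases eq_or_ne (w i) 0 with hi | hi
        · simp [hi]
        · exact mul_le_mul_right (h i hi) _
    _ = (∑' i, w i * A i) + ePos (-L) := by
        simp only [mul_add, ENNReal.tsum_add, ENNReal.tsum_mul_right, hw, one_mul]

lemma le_of_forall_pos_le_add_coe {a b : EReal}
    (h : ∀ ε : ℝ≥0∞, 0 < ε → ε ≠ ⊤ → a ≤ b + ε) : a ≤ b := by
  refine EReal.le_of_forall_lt_iff_le.1 fun z hz => ?_
  induction b with
  | bot =>
    rw [show a = ⊥ by simpa using h 1 one_pos ENNReal.one_ne_top]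
    exact bot_le
  | top => exact absurd hz (not_lt.2 le_top)
  | coe r =>
    have hrz : 0 < z - r := sub_pos.2 (EReal.coe_lt_coe_iff.1 hz)
    have := h (ENNReal.ofReal (z - r)) (ENNReal.ofReal_pos.2 hrz) ENNReal.ofReal_ne_top
    rwa [EReal.coe_ennreal_ofReal, max_eq_left hrz.le, ← EReal.coe_add, add_sub_cancel] at this

lemma iInf_add_coe {ι : Sort*} (t : ι → EReal) {e : ℝ≥0∞} (he : e ≠ ⊤) :
    ⨅ i, (t i + e) = (⨅ i, t i) + e := by
  have hcont : ContinuousAt (fun a : EReal => a + e) (⨅ i, t i) :=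
    (EReal.continuousAt_add (Or.inr (EReal.coe_ennreal_ne_bot e))
      (Or.inr (EReal.coe_ennreal_eq_top_iff.not.2 he))).comp
      (continuous_id.prodMk continuous_const).continuousAt
  exact (Monotone.map_iInf_of_continuousAt hcont (fun _ _ h => add_le_add_left h _)
    (EReal.top_add_of_ne_bot (EReal.coe_ennreal_ne_bot e))).symm

section MarkovOp

variable {α : Type*} (β : ℝ≥0∞) (Q : α → α → ℝ≥0∞) (f : α → ℝ≥0∞)

def markovOp (X : α → ℝ≥0∞) (y : α) : ℝ≥0∞ := f y + β * ∑' x, Q y x * X x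

lemma markovOp_mono : Monotone (markovOp β Q f) := fun _ _ h _ => by
  unfold markovOp
  gcongr
  exact h _

variable {Q}

lemma markovOp_add_const (hQ : ∀ y, ∑' x, Q y x = 1) (X : α → ℝ≥0∞) (k : ℝ≥0∞) :
    markovOp β Q f (fun x => X x + k) = fun y => markovOp β Q f X y + β * k := by
  ext y
  simp only [markovOp, mul_add, ENNReal.tsum_add, ENNReal.tsum_mul_right, hQ, one_mul, add_assoc]

lemma iterate_markovOp_add_const (hQ : ∀ y, ∑' x, Q y x = 1) (n : ℕ) (X : α → ℝ≥0∞)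
    (k : ℝ≥0∞) :
    (markovOp β Q f)^[n] (fun x => X x + k) = fun y => (markovOp β Q f)^[n] X y + β ^ n * k := by
  induction n generalizing k with
  | zero => simp
  | succ n ih =>
    rw [Function.iterate_succ_apply', Function.iterate_succ_apply', ih,
      markovOp_add_const β f hQ, pow_succ', mul_assoc]

/-- The inductive step adds the one-step inequality at `y` to the `Q y`-average of the induction
hypothesis and cancels the finite quantity `β Q a + β Q c`; the error grows to `ε + β δ ≤ δ`. -/
lemma iterate_markovOp_add_le {f' a c : α → ℝ≥0∞} {ε δ B : ℝ≥0∞} (hβ : β ≠ ⊤)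
    (hQ : ∀ y, ∑' x, Q y x = 1) (hf' : ∀ y, f' y ≠ ⊤) (hc : ∀ y, c y ≤ B) (hB : B ≠ ⊤)
    (hε : ε ≠ ⊤) (hεδ : ε + β * δ ≤ δ)
    (h : ∀ y, markovOp β Q f a y + c y ≤ a y + markovOp β Q f' c y + ε) (n : ℕ) (y : α) :
    (markovOp β Q f)^[n] a y + c y ≤ a y + (markovOp β Q f')^[n] c y + δ := by
  induction n generalizing y with
  | zero => exact le_self_add
  | succ n ih =>
    set W := (markovOp β Q f)^[n] a
    set V := (markovOp β Q f')^[n] c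
    rw [Function.iterate_succ_apply', Function.iterate_succ_apply']
    rcases eq_or_ne (a y) ⊤ with ha | ha
    · simp [ha]
    have hQc : β * ∑' x, Q y x * c x ≠ ⊤ := by
      refine ENNReal.mul_ne_top hβ (ne_top_of_le_ne_top hB ?_)
      calc ∑' x, Q y x * c x ≤ ∑' x, Q y x * B := ENNReal.tsum_le_tsum fun x => by gcongr; exact hc x
        _ = B := by rw [ENNReal.tsum_mul_right, hQ, one_mul]
    have hQa : β * ∑' x, Q y x * a x ≠ ⊤ := by
      have hrhs : a y + markovOp β Q f' c y + ε ≠ ⊤ := by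
        simp [markovOp, ENNReal.add_eq_top, ha, hf', hQc, hε]
      exact ne_top_of_le_ne_top hrhs ((le_add_right le_add_self).trans (h y))
    have hsum : ∑' x, Q y x * W x + ∑' x, Q y x * c x
        ≤ ∑' x, Q y x * a x + ∑' x, Q y x * V x + δ := by
      calc ∑' x, Q y x * W x + ∑' x, Q y x * c x = ∑' x, Q y x * (W x + c x) := by
            simp only [mul_add, ENNReal.tsum_add]
        _ ≤ ∑' x, Q y x * (a x + V x + δ) :=
            ENNReal.tsum_le_tsum fun x => mul_le_mul_right (ih x) _
        _ = _ := by simp only [mul_add, ENNReal.tsum_add, ENNReal.tsum_mul_right, hQ, one_mul]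
    refine (ENNReal.add_le_add_iff_right (ENNReal.add_ne_top.2 ⟨hQa, hQc⟩)).1 ?_
    calc markovOp β Q f W y + c y + (β * ∑' x, Q y x * a x + β * ∑' x, Q y x * c x)
        = markovOp β Q f a y + c y + β * (∑' x, Q y x * W x + ∑' x, Q y x * c x) := by
          simp only [markovOp]; ring
      _ ≤ a y + markovOp β Q f' c y + ε + β * (∑' x, Q y x * a x + ∑' x, Q y x * V x + δ) :=
          add_le_add (h y) (mul_le_mul_right hsum _)
      _ = a y + markovOp β Q f' V y + (ε + β * δ)
            + (β * ∑' x, Q y x * a x + β * ∑' x, Q y x * c x) := by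
          simp only [markovOp]; ring
      _ ≤ a y + markovOp β Q f' V y + δ
            + (β * ∑' x, Q y x * a x + β * ∑' x, Q y x * c x) := by
          gcongr

end MarkovOp

section Policies

variable (q : S → C → S → ℝ≥0∞)

def shiftPolicy (π : Policy S C) (p : S × C) : Policy S C := fun h => π (h ++ [p])

lemma IsPolicy.shiftPolicy {U : S → Set C} {π : Policy S C} (hπ : IsPolicy U π) (p : S × C) :
    IsPolicy U (shiftPolicy π p) := fun h => hπ (h ++ [p])

lemma histProb_append_singleton (π : Policy S C) (x₀ z : S) (u : C) (h : List (S × C))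
    (y : S) :
    histProb q π x₀ (h ++ [(z, u)]) y = (if z = x₀ then 1 else 0) * π [] z u *
      ∑' x₁, q z u x₁ * histProb q (shiftPolicy π (z, u)) x₁ h y := by
  induction h generalizing y with
  | nil => simp [histProb, mul_ite]
  | cons p t ih =>
    obtain ⟨a, v⟩ := p
    simp only [List.cons_append, histProb, ih, shiftPolicy, ← ENNReal.tsum_mul_right, mul_assoc]

/-- Histories are stored newest first, so the first step of a history is its last entry. -/
def snocEquiv (α : Type*) (n : ℕ) :
    {l : List α // l.length = n} × α ≃ {l : List α // l.length = n + 1} where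
  toFun p := ⟨p.1.1 ++ [p.2], by simp [p.1.2]⟩
  invFun l := (⟨l.1.dropLast, by simp [l.2]⟩, l.1.getLast (List.ne_nil_of_length_eq_add_one l.2))
  left_inv p := by ext <;> simp
  right_inv l := Subtype.ext (List.dropLast_append_getLast _)

lemma saDist_zero (π : Policy S C) (x₀ y : S) (u : C) :
    saDist q π x₀ 0 y u = (if y = x₀ then 1 else 0) * π [] y u := by
  rw [saDist, tsum_eq_single (⟨[], rfl⟩ : {l : List (S × C) // l.length = 0})
    fun h hh => absurd (Subtype.ext (List.length_eq_zero_iff.1 h.2)) hh]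
  rfl

lemma saDist_succ (π : Policy S C) (x₀ : S) (n : ℕ) (y : S) (u : C) :
    saDist q π x₀ (n + 1) y u = ∑' u₀, π [] x₀ u₀ *
      ∑' x₁, q x₀ u₀ x₁ * saDist q (shiftPolicy π (x₀, u₀)) x₁ n y u := by
  calc saDist q π x₀ (n + 1) y u
      = ∑' z, ∑' u₀, ∑' h : {l : List (S × C) // l.length = n},
          histProb q π x₀ (h.1 ++ [(z, u₀)]) y * π (h.1 ++ [(z, u₀)]) y u := by
        rw [saDist, ← (snocEquiv (S × C) n).tsum_eq, ENNReal.tsum_prod', ENNReal.tsum_comm,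
          ENNReal.tsum_prod']
        rfl
    _ = ∑' z, (if z = x₀ then 1 else 0) * ∑' u₀, π [] z u₀ *
          ∑' x₁, q z u₀ x₁ * saDist q (shiftPolicy π (z, u₀)) x₁ n y u := by
        refine tsum_congr fun z => ?_
        rw [← ENNReal.tsum_mul_left]
        refine tsum_congr fun u₀ => ?_
        simp only [histProb_append_singleton, saDist, ← ENNReal.tsum_mul_left,
          ← ENNReal.tsum_mul_right, mul_assoc]
        rw [ENNReal.tsum_comm]
        rfl
    _ = _ := by simp [ite_mul]

lemma costAt_zero (π : Policy S C) (x₀ : S) (f : S → C → ℝ≥0∞) :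
    costAt q π x₀ 0 f = ∑' u, π [] x₀ u * f x₀ u := by
  simp only [costAt, saDist_zero, mul_assoc, ENNReal.tsum_mul_left]
  simp only [ite_mul, one_mul, zero_mul, tsum_ite_eq]

lemma costAt_succ (π : Policy S C) (x₀ : S) (n : ℕ) (f : S → C → ℝ≥0∞) :
    costAt q π x₀ (n + 1) f = ∑' u₀, π [] x₀ u₀ *
      ∑' x₁, q x₀ u₀ x₁ * costAt q (shiftPolicy π (x₀, u₀)) x₁ n f := by
  simp only [costAt, saDist_succ, ← ENNReal.tsum_mul_left, ← ENNReal.tsum_mul_right, mul_assoc]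
  calc _ = ∑' y, ∑' u₀, ∑' u, ∑' x₁, _ := tsum_congr fun _ => ENNReal.tsum_comm
    _ = ∑' u₀, ∑' y, ∑' u, ∑' x₁, _ := ENNReal.tsum_comm
    _ = ∑' u₀, ∑' y, ∑' x₁, ∑' u, _ := tsum_congr fun _ => tsum_congr fun _ => ENNReal.tsum_comm
    _ = _ := tsum_congr fun _ => ENNReal.tsum_comm

lemma tsum_pow_mul_costAt (β : ℝ≥0∞) (π : Policy S C) (x₀ : S) (f : S → C → ℝ≥0∞) :
    ∑' n, β ^ n * costAt q π x₀ n f = ∑' u₀, π [] x₀ u₀ * (f x₀ u₀ +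
      β * ∑' x₁, q x₀ u₀ x₁ * ∑' n, β ^ n * costAt q (shiftPolicy π (x₀, u₀)) x₁ n f) := by
  rw [tsum_eq_zero_add' ENNReal.summable, pow_zero, one_mul, costAt_zero]
  simp only [costAt_succ, mul_add, ENNReal.tsum_add, pow_succ', ← ENNReal.tsum_mul_left, mul_assoc]
  congr 1
  rw [ENNReal.tsum_comm]
  refine tsum_congr fun u₀ => ?_
  rw [ENNReal.tsum_comm]
  exact tsum_congr fun x₁ => tsum_congr fun n => by ring

def selectorPolicy (μ : S → C) : Policy S C := toPolicy fun y u => if u = μ y then 1 else 0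

lemma isPolicy_selectorPolicy {U : S → Set C} {μ : S → C} (hμ : ∀ y, μ y ∈ U y) :
    IsPolicy U (selectorPolicy μ) := fun _ y =>
  ⟨by simp [selectorPolicy, toPolicy], fun u hu => by
    simp only [selectorPolicy, toPolicy, ne_eq, ite_eq_right_iff, one_ne_zero, imp_false,
      not_not] at hu
    exact hu ▸ hμ y⟩

lemma shiftPolicy_selectorPolicy (μ : S → C) (p : S × C) :
    shiftPolicy (selectorPolicy μ) p = selectorPolicy μ := rfl

lemma tsum_selectorPolicy_mul (μ : S → C) (h : List (S × C)) (y : S) (F : C → ℝ≥0∞) :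
    ∑' u, selectorPolicy μ h y u * F u = F (μ y) := by
  simp [selectorPolicy, toPolicy, ite_mul]

lemma iterate_markovOp_zero_eq_sum (β : ℝ≥0∞) (μ : S → C) (f : S → C → ℝ≥0∞) (n : ℕ) (y : S) :
    (markovOp β (fun y => q y (μ y)) (fun y => f y (μ y)))^[n] 0 y =
      ∑ k ∈ Finset.range n, β ^ k * costAt q (selectorPolicy μ) y k f := by
  induction n generalizing y with
  | zero => simp
  | succ n ih =>
    rw [Function.iterate_succ_apply', Finset.sum_range_succ', pow_zero, one_mul, costAt_zero,
      tsum_selectorPolicy_mul, markovOp, add_comm]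
    simp only [ih, costAt_succ, shiftPolicy_selectorPolicy, tsum_selectorPolicy_mul]
    simp only [pow_succ', mul_assoc, Finset.mul_sum, ← ENNReal.tsum_mul_left]
    rw [Summable.tsum_finsetSum fun _ _ => ENNReal.summable]
    exact congrArg (· + _) (Finset.sum_congr rfl fun _ _ => tsum_congr fun _ => by ring)

lemma tsum_costAt_selectorPolicy_add_le {β δ B : ℝ≥0∞} (hβ : β < 1) {μ : S → C}
    (hQ : ∀ y, ∑' x, q y (μ y) x = 1) {f f' : S → C → ℝ≥0∞} (hf' : ∀ y, f' y (μ y) ≠ ⊤)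
    {a c : S → ℝ≥0∞} (hc : ∀ y, c y ≤ B) (hB : B ≠ ⊤) (hδ : δ ≠ ⊤)
    (h : ∀ y, f y (μ y) + β * ∑' x, q y (μ y) x * a x + c y
      ≤ a y + (f' y (μ y) + β * ∑' x, q y (μ y) x * c x) + (1 - β) * δ) (y : S) :
    ∑' n, β ^ n * costAt q (selectorPolicy μ) y n f + c y
      ≤ a y + ∑' n, β ^ n * costAt q (selectorPolicy μ) y n f' + δ := by
  set F := markovOp β (fun y => q y (μ y)) (fun y => f y (μ y))
  set F' := markovOp β (fun y => q y (μ y)) (fun y => f' y (μ y))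
  have hεδ : (1 - β) * δ + β * δ ≤ δ := by rw [← add_mul, tsub_add_cancel_of_le hβ.le, one_mul]
  have hbound : ∀ n, F^[n] 0 y + c y
      ≤ a y + ∑' n, β ^ n * costAt q (selectorPolicy μ) y n f' + δ + β ^ n * B := fun n =>
    calc F^[n] 0 y + c y ≤ F^[n] a y + c y :=
          add_le_add_left (((markovOp_mono _ _ _).iterate n) (fun _ => bot_le) y) _
      _ ≤ a y + F'^[n] c y + δ :=
          iterate_markovOp_add_le β _ hβ.ne_top hQ hf' hc hB
            (ENNReal.mul_ne_top (ENNReal.sub_ne_top ENNReal.one_ne_top) hδ) hεδ h n y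
      _ ≤ a y + (F'^[n] 0 y + β ^ n * B) + δ := by
          gcongr
          calc F'^[n] c y ≤ F'^[n] (fun x => (0 : S → ℝ≥0∞) x + B) y :=
                ((markovOp_mono _ _ _).iterate n) (fun x => by simpa using hc x) y
            _ = _ := congrFun (iterate_markovOp_add_const β _ hQ n 0 B) y
      _ ≤ a y + (∑' n, β ^ n * costAt q (selectorPolicy μ) y n f' + β ^ n * B) + δ := by
          rw [iterate_markovOp_zero_eq_sum]
          gcongr
          exact ENNReal.sum_le_tsum _
      _ = _ := by ring
  have hlhs : Tendsto (fun n => F^[n] 0 y + c y) atTop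
      (nhds (∑' n, β ^ n * costAt q (selectorPolicy μ) y n f + c y)) := by
    simp only [F, iterate_markovOp_zero_eq_sum]
    exact (ENNReal.tendsto_nat_tsum _).add tendsto_const_nhds
  have hrhs := (tendsto_const_nhds
    (x := a y + ∑' n, β ^ n * costAt q (selectorPolicy μ) y n f' + δ)).add
    (ENNReal.Tendsto.mul_const (ENNReal.tendsto_pow_atTop_nhds_zero_of_lt_one hβ) (Or.inr hB))
  simpa using le_of_tendsto_of_tendsto' hlhs hrhs hbound

end Policies

section DynamicProgramming

variable {β : ℝ} {U : S → Set C} {q : S → C → S → ℝ≥0∞} {g : S → C → EReal}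

lemma JplusD_eq (π : Policy S C) (x : S) :
    JplusD β q g π x = ∑' u, π [] x u * (ePos (g x u) +
      ENNReal.ofReal β * ∑' x₁, q x u x₁ * JplusD β q g (shiftPolicy π (x, u)) x₁) :=
  tsum_pow_mul_costAt q _ π x (gPos g)

lemma JminusD_eq (π : Policy S C) (x : S) :
    JminusD β q g π x = ∑' u, π [] x u * (ePos (-(g x u)) +
      ENNReal.ofReal β * ∑' x₁, q x u x₁ * JminusD β q g (shiftPolicy π (x, u)) x₁) :=
  tsum_pow_mul_costAt q _ π x (gNeg g)

lemma JminusD_ne_top (hGC : GCD β U q g) {π : Policy S C} (hπ : IsPolicy U π) (x : S) :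
    JminusD β q g π x ≠ ⊤ :=
  ne_top_of_le_ne_top (hGC x) (le_iSup₂ (f := fun π _ => JminusD β q g π x) π hπ)

lemma TopD_mono : Monotone (TopD β U q g) := fun _ _ h _ =>
  iInf₂_mono fun _ _ => signedSum_mono (by gcongr; exact ePos_mono (h _))
    (by gcongr; exact ePos_mono (EReal.neg_le_neg_iff.2 (h _)))

lemma TopD_add_const_le (hq : ∀ x, ∀ u ∈ U x, ∑' x', q x u x' = 1) {K : S → EReal}
    (hK : ∀ y, 0 ≤ K y) {c : ℝ≥0∞} (hc : c ≠ ⊤) (x : S) :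
    TopD β U q g (fun y => K y + c) x ≤ TopD β U q g K x + (ENNReal.ofReal β * c : ℝ≥0∞) := by
  have hβc : ENNReal.ofReal β * c ≠ ⊤ := ENNReal.mul_ne_top ENNReal.ofReal_ne_top hc
  simp only [TopD, ← iInf_add_coe _ hβc]
  refine iInf₂_mono fun u hu => ?_
  rw [signedSum_add_coe _ _ hβc]
  refine signedSum_mono ?_ ?_
  · calc ePos (g x u) + ENNReal.ofReal β * ∑' x₁, q x u x₁ * ePos (K x₁ + c)
        ≤ ePos (g x u) + ENNReal.ofReal β * ∑' x₁, q x u x₁ * (ePos (K x₁) + c) := by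
          gcongr with x₁
          exact (ePos_add_le _ _).trans_eq (by rw [ePos_coe])
      _ = _ := by
          rw [add_assoc, ← mul_add]
          simp only [mul_add, ENNReal.tsum_add, ENNReal.tsum_mul_right, hq x u hu, one_mul]
  · simp [ePos_neg_of_nonneg (hK _)]

lemma TopD_JstarD_le (hg : ∀ x, ∀ u ∈ U x, g x u ≠ ⊥) (hpos : ∀ x, 0 ≤ JstarD β U q g x)
    (x : S) : TopD β U q g (JstarD β U q g) x ≤ JstarD β U q g x := by
  refine le_iInf₂ fun π hπ => ?_
  rw [JpolD, JplusD_eq, JminusD_eq]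
  refine le_signedSum_tsum (hπ [] x).1 fun u hu => ?_
  have hUx : u ∈ U x := (hπ [] x).2 u hu
  refine (iInf₂_le u hUx).trans ?_
  set σ := shiftPolicy π (x, u)
  have hσ : ∀ y, ePos (JstarD β U q g y) + JminusD β q g σ y
      ≤ JplusD β q g σ y + ePos (-JstarD β U q g y) := fun y =>
    (le_signedSum_iff (ne_bot_of_le_ne_bot EReal.zero_ne_bot (hpos y))).1
      (iInf₂_le σ (hπ.shiftPolicy (x, u)))
  have hfin : ePos (-(g x u)) + ENNReal.ofReal β *
      ∑' y, q x u y * ePos (-JstarD β U q g y) ≠ ⊤ := by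
    simpa [ePos_neg_of_nonneg (hpos _)] using ePos_neg_ne_top (hg x u hUx)
  rw [signedSum_le_signedSum_iff hfin]
  calc _ = ePos (g x u) + ePos (-(g x u)) + ENNReal.ofReal β *
        ∑' y, q x u y * (ePos (JstarD β U q g y) + JminusD β q g σ y) := by
        simp only [mul_add, ENNReal.tsum_add]; ring
    _ ≤ ePos (g x u) + ePos (-(g x u)) + ENNReal.ofReal β *
        ∑' y, q x u y * (JplusD β q g σ y + ePos (-JstarD β U q g y)) :=
        add_le_add_right
          (mul_le_mul_right (ENNReal.tsum_le_tsum fun y => mul_le_mul_right (hσ y) _) _) _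
    _ = _ := by simp only [mul_add, ENNReal.tsum_add]; ring

lemma le_JstarD_of_TopD_eq (hβ : β < 1) (hg : ∀ x, ∀ u ∈ U x, g x u ≠ ⊥)
    (hq : ∀ x, ∀ u ∈ U x, ∑' x', q x u x' = 1) (hpos : ∀ x, 0 ≤ JstarD β U q g x)
    {J : S → EReal} {B : ℝ≥0∞} (hB : B ≠ ⊤) (hub : ∀ x, J x ≤ JstarD β U q g x + B)
    (hfix : ∀ x, TopD β U q g J x = J x) (x : S) :
    J x ≤ JstarD β U q g x := by
  have hiter : ∀ n y, J y ≤ JstarD β U q g y + (ENNReal.ofReal β ^ n * B : ℝ≥0∞) := by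
    intro n
    induction n with
    | zero => simpa using hub
    | succ n ih =>
      intro y
      calc J y = TopD β U q g J y := (hfix y).symm
        _ ≤ TopD β U q g (fun z => JstarD β U q g z + (ENNReal.ofReal β ^ n * B : ℝ≥0∞)) y :=
          TopD_mono ih y
        _ ≤ TopD β U q g (JstarD β U q g) y
              + (ENNReal.ofReal β * (ENNReal.ofReal β ^ n * B) : ℝ≥0∞) :=
          TopD_add_const_le hq hpos
            (ENNReal.mul_ne_top (ENNReal.pow_ne_top ENNReal.ofReal_ne_top) hB) y
        _ ≤ JstarD β U q g y + (ENNReal.ofReal β ^ (n + 1) * B : ℝ≥0∞) := by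
          rw [pow_succ', mul_assoc]
          exact add_le_add_left (TopD_JstarD_le hg hpos y) _
  refine le_of_forall_pos_le_add_coe fun ε hε _ => ?_
  have hlim := ENNReal.Tendsto.mul_const
    (ENNReal.tendsto_pow_atTop_nhds_zero_of_lt_one (ENNReal.ofReal_lt_one.2 hβ)) (Or.inr hB)
  rw [zero_mul] at hlim
  obtain ⟨n, hn⟩ := (hlim.eventually (gt_mem_nhds hε)).exists
  exact (hiter n x).trans (add_le_add_right (EReal.coe_ennreal_le_coe_ennreal_iff.2 hn.le) _)

lemma exists_control_le_add (hU : ∀ x, (U x).Nonempty) {J : S → EReal}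
    (hfix : ∀ x, TopD β U q g J x = J x) {y : S} (hy : J y ≠ ⊥) {ε : ℝ≥0∞} (hε : 0 < ε)
    (hε' : ε ≠ ⊤) :
    ∃ u ∈ U y, ePos (g y u) + ENNReal.ofReal β * ∑' x, q y u x * ePos (J x) + ePos (-J y)
      ≤ ePos (J y) + (ePos (-(g y u)) + ENNReal.ofReal β * ∑' x, q y u x * ePos (-J x)) + ε := by
  rcases eq_or_ne (J y) ⊤ with hJ | hJ
  · obtain ⟨u, hu⟩ := hU y
    exact ⟨u, hu, by simp [hJ, ePos]⟩
  have hlt : TopD β U q g J y < J y + ε := by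
    rw [hfix, ← EReal.coe_toReal hJ hy, ← EReal.coe_ennreal_toReal hε', ← EReal.coe_add,
      EReal.coe_lt_coe_iff]
    exact lt_add_of_pos_right _ (ENNReal.toReal_pos hε.ne' hε')
  obtain ⟨u, hu, hlt⟩ := by simpa only [TopD, iInf_lt_iff, exists_prop] using hlt
  refine ⟨u, hu, ?_⟩
  rcases eq_or_ne (ePos (-(g y u)) + ENNReal.ofReal β * ∑' x, q y u x * ePos (-J x)) ⊤
    with hN | hN
  · simp [hN]
  · exact (signedSum_le_add_iff hN hε' _).1 hlt.le

lemma JstarD_le_of_TopD_eq (hβ : β < 1) (hU : ∀ x, (U x).Nonempty)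
    (hg : ∀ x, ∀ u ∈ U x, g x u ≠ ⊥) (hq : ∀ x, ∀ u ∈ U x, ∑' x', q x u x' = 1)
    (hGC : GCD β U q g) {J : S → EReal} {b : ℝ} (hlb : ∀ x, -(b : EReal) ≤ J x)
    (hfix : ∀ x, TopD β U q g J x = J x) (x : S) :
    JstarD β U q g x ≤ J x := by
  have hJ : ∀ y, J y ≠ ⊥ := fun y => ne_bot_of_le_ne_bot (by simp) (hlb y)
  have hc : ∀ y, ePos (-J y) ≤ ENNReal.ofReal b := fun y => ePos_mono (EReal.neg_le.1 (hlb y))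
  have hβ' : ENNReal.ofReal β < 1 := ENNReal.ofReal_lt_one.2 hβ
  refine le_of_forall_pos_le_add_coe fun δ hδ hδ' => ?_
  choose μ hμU hμ using fun y => exists_control_le_add hU hfix (hJ y)
    (ENNReal.mul_pos (tsub_pos_of_lt hβ').ne' hδ.ne')
    (ENNReal.mul_ne_top (ENNReal.sub_ne_top ENNReal.one_ne_top) hδ')
  have hπ := isPolicy_selectorPolicy hμU
  refine (iInf₂_le _ hπ).trans ?_
  rw [JpolD, signedSum_le_add_iff (JminusD_ne_top hGC hπ x) hδ']
  exact tsum_costAt_selectorPolicy_add_le q hβ' (fun y => hq y _ (hμU y)) (f := gPos g)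
    (f' := gNeg g) (fun y => ePos_neg_ne_top (hg y _ (hμU y))) hc ENNReal.ofReal_ne_top hδ' hμ x

end DynamicProgramming

theorem discounted_unique_fixed_point_general {S C : Type}
    (U : S → Set C) (q : S → C → S → ℝ≥0∞) (g : S → C → EReal)
    (β : ℝ) (hβ1 : β < 1)
    (hU : ∀ x, (U x).Nonempty)
    (hg : ∀ x, ∀ u ∈ U x, g x u ≠ ⊥)
    (hq : ∀ x, ∀ u ∈ U x, (∑' x' : S, q x u x') = 1)
    (hGC : GCD β U q g)
    (hpos : ∀ x : S, 0 ≤ JstarD β U q g x)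
    (J : S → EReal) (b : ℝ) (hb : 0 ≤ b)
    (hlb : ∀ x : S, -(b : EReal) ≤ J x)
    (hub : ∀ x : S, J x ≤ JstarD β U q g x + (b : EReal))
    (hfix : ∀ x : S, TopD β U q g J x = J x) :
    J = JstarD β U q g := by
  have hub' : ∀ x, J x ≤ JstarD β U q g x + (ENNReal.ofReal b : ℝ≥0∞) := by
    simpa [EReal.coe_ennreal_ofReal, max_eq_left hb] using hub
  funext x
  exact le_antisymm (le_JstarD_of_TopD_eq hβ1 hg hq hpos ENNReal.ofReal_ne_top hub' hfix x)
    (JstarD_le_of_TopD_eq hβ1 hU hg hq hGC hlb hfix x)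

/-- UD model: if `J* ≥ 0`, then `J*` is the unique fixed
point of `T` among functions `J` with `-b ≤ J ≤ J* + b` for some `b ≥ 0`. -/
theorem discounted_unique_fixed_point {S C : Type} [Countable S] [Countable C]
    (U : S → Set C) (q : S → C → S → ℝ≥0∞) (g : S → C → EReal)
    (β : ℝ) (hβ0 : 0 ≤ β) (hβ1 : β < 1)
    (hU : ∀ x, (U x).Nonempty)
    (hg : ∀ x, ∀ u ∈ U x, g x u ≠ ⊥)
    (hq : ∀ x, ∀ u ∈ U x, (∑' x' : S, q x u x') = 1)
    (hGC : GCD β U q g)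
    (hpos : ∀ x : S, 0 ≤ JstarD β U q g x)
    (J : S → EReal) (b : ℝ) (hb : 0 ≤ b)
    (hlb : ∀ x : S, -(b : EReal) ≤ J x)
    (hub : ∀ x : S, J x ≤ JstarD β U q g x + (b : EReal))
    (hfix : ∀ x : S, TopD β U q g J x = J x) :
    J = JstarD β U q g :=
  discounted_unique_fixed_point_general U q g β hβ1 hU hg hq hGC hpos J b hb hlb hub hfix

end GCMDP

end
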